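/- If G is a connected graph of order n and maximum degree Δ ≥ 3 that is not the complete graph K_{Δ+1}, then Z(G) ≤ (Δ−1)·n/Δ. -/

import Mathlib

/-!
A connected graph that is not complete contains an induced path `a - b - c`; then `c` forces `b`
and `b` forces `a`, so all vertices but `a, b` form a zero forcing set and `Z(G) ≤ n - 2`.
This settles the case `n ≤ 2Δ`.

For `n ≥ 2Δ` we use the greedy bound `(Δ - 1) Z(G) ≤ (Δ - 2) n + 2`. Start from the two ends of an
edge and keep a set `C` in which every vertex has a neighbour in `C`. A vertex `w ∈ C` with a
neighbour outside `C` has `k ≤ Δ - 1` such neighbours; putting all but one of them into the forcing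
set lets `w` force the last one, so `C` grows by `k` at the cost of `k - 1 ≤ (Δ - 2) k / (Δ - 1)`
vertices.
-/

namespace SimpleGraph

variable {V : Type*}

/-- `G.ZeroForces Z v` : vertex `v` is eventually colored when starting from `Z`
and iteratively adding any vertex that is the unique uncolored neighbor of a colored vertex. -/
inductive ZeroForces (G : SimpleGraph V) (Z : Set V) : V → Prop
  | base {v : V} : v ∈ Z → ZeroForces G Z v
  | force {v u : V} : ZeroForces G Z v → G.Adj v u →
      (∀ w, G.Adj v w → w ≠ u → ZeroForces G Z w) → ZeroForces G Z u

/-- The forcing closure `F(Z)`. -/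
def zfClosure (G : SimpleGraph V) (Z : Set V) : Set V := {v | G.ZeroForces Z v}

/-- `Z` is a zero forcing set of `G`. -/
def IsZeroForcingSet (G : SimpleGraph V) (Z : Set V) : Prop := ∀ v, G.ZeroForces Z v

/-- The zero forcing number `Z(G)`. -/
noncomputable def zeroForcingNumber (G : SimpleGraph V) [Fintype V] : ℕ :=
  sInf {k | ∃ Z : Finset V, Z.card = k ∧ G.IsZeroForcingSet ↑Z}

end SimpleGraph

namespace SimpleGraph

open Finset

variable {V : Type*} {G : SimpleGraph V}

theorem ZeroForces.trans {Z Z' : Set V} (h : ∀ z ∈ Z', G.ZeroForces Z z) {v : V}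
    (hv : G.ZeroForces Z' v) : G.ZeroForces Z v := by
  induction hv with
  | base hz => exact h _ hz
  | force _ hadj _ ih₁ ih₂ => exact .force ih₁ hadj ih₂

theorem IsZeroForcingSet.mono {S T : Set V} (hST : S ⊆ T) (hS : G.IsZeroForcingSet S) :
    G.IsZeroForcingSet T :=
  fun v => (hS v).trans fun _ hz => .base (hST hz)

theorem IsZeroForcingSet.of_insert_forced {S : Set V} {w u : V} (hw : w ∈ S) (hwu : G.Adj w u)
    (hS : ∀ x, G.Adj w x → x ≠ u → x ∈ S) (h : G.IsZeroForcingSet (insert u S)) :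
    G.IsZeroForcingSet S := by
  intro v
  refine (h v).trans ?_
  rintro z (rfl | hz)
  · exact .force (.base hw) hwu fun x hx hxu => .base (hS x hx hxu)
  · exact .base hz

theorem isZeroForcingSet_compl_pair {a b c : V} (hab : G.Adj a b) (hbc : G.Adj b c)
    (hnac : ¬G.Adj a c) (hac : a ≠ c) : G.IsZeroForcingSet ({a, b}ᶜ : Set V) := by
  refine .of_insert_forced (w := c) (u := b) (by simp [hac.symm, hbc.ne']) hbc.symm ?_ ?_
  · rintro x hcx hxb
    simp only [Set.mem_compl_iff, Set.mem_insert_iff, Set.mem_singleton_iff, not_or]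
    exact ⟨by rintro rfl; exact hnac hcx.symm, hxb⟩
  refine .of_insert_forced (w := b) (u := a) (by simp) hab.symm ?_ ?_
  · intro x _ hxa
    by_cases hxb : x = b <;> simp [hxa, hxb]
  exact fun v => .base (by by_cases hva : v = a <;> by_cases hvb : v = b <;> simp [hva, hvb])

theorem Preconnected.exists_adj_mem_notMem (h : G.Preconnected) {S : Set V} {x y : V}
    (hx : x ∈ S) (hy : y ∉ S) : ∃ w ∈ S, ∃ u ∉ S, G.Adj w u := by
  obtain ⟨d, -, hd, hd'⟩ := (h x y).some.exists_boundary_dart S hx hy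
  exact ⟨_, hd, _, hd', d.adj⟩

theorem Connected.exists_adj_adj_not_adj_of_ne_top (h : G.Connected) (hG : G ≠ ⊤) :
    ∃ a b c, G.Adj a b ∧ G.Adj b c ∧ ¬G.Adj a c ∧ a ≠ c := by
  obtain ⟨x, y, hxy, hnxy⟩ := ne_top_iff_exists_not_adj.mp hG
  obtain ⟨p, hp⟩ := (h x y).exists_walk_length_eq_dist
  exact p.exists_adj_adj_not_adj_ne hp (h.one_lt_dist_of_ne_of_not_adj hxy hnxy)

theorem two_le_degree {a b c : V} [Fintype (G.neighborSet b)] (hba : G.Adj b a) (hbc : G.Adj b c)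
    (hac : a ≠ c) : 2 ≤ G.degree b := by
  classical
  rw [← card_neighborFinset_eq_degree, ← card_pair hac]
  exact card_le_card fun x hx => by
    rcases mem_insert.mp hx with rfl | hx
    · simpa
    · simpa [mem_singleton.mp hx]

variable [Fintype V]

theorem card_eq_maxDegree_add_one_of_eq_top [Nonempty V] [DecidableRel G.Adj] (hG : G = ⊤) :
    Fintype.card V = G.maxDegree + 1 := by
  subst hG
  have := Fintype.card_pos (α := V)
  have htop : (⊤ : SimpleGraph V).maxDegree = Fintype.card V - 1 := by
    convert @maxDegree_top V _ (Classical.decEq V)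
  omega

theorem zeroForcingNumber_le_card {Z : Finset V} (hZ : G.IsZeroForcingSet Z) :
    G.zeroForcingNumber ≤ #Z :=
  Nat.sInf_le ⟨Z, rfl, hZ⟩

theorem zeroForcingNumber_add_two_le {a b c : V} (hab : G.Adj a b) (hbc : G.Adj b c)
    (hnac : ¬G.Adj a c) (hac : a ≠ c) : G.zeroForcingNumber + 2 ≤ Fintype.card V := by
  classical
  have hZ := zeroForcingNumber_le_card (G := G) (Z := {a, b}ᶜ) (by
    rw [coe_compl, coe_pair]; exact isZeroForcingSet_compl_pair hab hbc hnac hac)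
  have hab' : #{a, b} = 2 := card_pair hab.ne
  have := card_le_univ ({a, b} : Finset V)
  rw [card_compl] at hZ
  omega

variable [DecidableEq V] [DecidableRel G.Adj]

theorem card_neighborFinset_sdiff_lt_degree {C : Finset V} {w w' : V} (hw' : w' ∈ C)
    (hww' : G.Adj w w') : #(G.neighborFinset w \ C) < G.degree w := by
  rw [← card_neighborFinset_eq_degree]
  exact card_lt_card ⟨sdiff_subset, fun h => (mem_sdiff.mp (h (by simpa))).2 hw'⟩

theorem IsZeroForcingSet.of_union_neighborFinset_sdiff {C B : Finset V} {w u : V} (hw : w ∈ C)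
    (hwu : G.Adj w u) (h : G.IsZeroForcingSet ↑(C ∪ (G.neighborFinset w \ C) ∪ B)) :
    G.IsZeroForcingSet ↑(C ∪ (B ∪ (G.neighborFinset w \ C).erase u)) := by
  refine .of_insert_forced (w := w) (u := u) (by simp [hw]) hwu ?_ (h.mono ?_)
  · intro v hwv hvu
    by_cases hvC : v ∈ C
    · simp [hvC]
    · simp [hvC, hvu, hwv]
  · intro v hv
    by_cases hvu : v = u
    · simp [hvu]
    · simp only [coe_union, coe_erase, coe_sdiff, Set.mem_insert_iff, Set.mem_union,
        Set.mem_sdiff, mem_coe, hvu, false_or] at hv ⊢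
      tauto

theorem Connected.exists_isZeroForcingSet_union (hconn : G.Connected) {d : ℕ}
    (hdeg : ∀ v, G.degree v ≤ d + 2) (C : Finset V) (hC : C.Nonempty)
    (hCadj : ∀ w ∈ C, ∃ w' ∈ C, G.Adj w w') :
    ∃ B : Finset V, (d + 1) * #B ≤ d * #Cᶜ ∧ G.IsZeroForcingSet ↑(C ∪ B) := by
  induction hm : #Cᶜ using Nat.strong_induction_on generalizing C with
  | _ m ih =>
  obtain ⟨x, hx⟩ := hC
  by_cases hCuniv : ∀ v, v ∈ C
  · exact ⟨∅, by simp, fun v => .base (by simp [hCuniv])⟩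
  obtain ⟨y, hy⟩ := not_forall.mp hCuniv
  obtain ⟨w, hw, u, hu, hwu⟩ :=
    hconn.preconnected.exists_adj_mem_notMem (S := (C : Set V)) hx hy
  set N := G.neighborFinset w \ C
  have huN : u ∈ N := by simp_all [N]
  have hN : #N ≤ d + 1 := by
    obtain ⟨w', hw', hww'⟩ := hCadj w hw
    have : #N < G.degree w := card_neighborFinset_sdiff_lt_degree hw' hww'
    have := hdeg w
    omega
  have hNC : N ⊆ Cᶜ := fun v hv => mem_compl.mpr (mem_sdiff.mp hv).2
  have hNm : #N ≤ m := hm ▸ card_le_card hNC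
  have hCN : #(C ∪ N)ᶜ = m - #N := by
    rw [compl_union, ← sdiff_eq_inter_compl, card_sdiff_of_subset hNC, hm]
  have hCNadj : ∀ v ∈ C ∪ N, ∃ v' ∈ C ∪ N, G.Adj v v' := by
    intro v hv
    rcases mem_union.mp hv with hv | hv
    · obtain ⟨v', hv', hvv'⟩ := hCadj v hv
      exact ⟨v', mem_union_left _ hv', hvv'⟩
    · exact ⟨w, mem_union_left _ hw, ((G.mem_neighborFinset w v).mp (mem_sdiff.mp hv).1).symm⟩
  obtain ⟨B, hB, hBZ⟩ :=
    ih _ (by have := card_pos.mpr ⟨u, huN⟩; omega) (C ∪ N) ⟨x, by simp [hx]⟩ hCNadj hCN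
  refine ⟨B ∪ N.erase u, ?_, hBZ.of_union_neighborFinset_sdiff hw hwu⟩
  have hcard : #(B ∪ N.erase u) + 1 ≤ #B + #N := by
    have := card_union_le B (N.erase u)
    rw [card_erase_of_mem huN] at this
    have := card_pos.mpr ⟨u, huN⟩
    omega
  obtain ⟨r, rfl⟩ : ∃ r, m = r + #N := ⟨m - #N, by omega⟩
  rw [Nat.add_sub_cancel] at hB
  nlinarith

theorem Connected.succ_mul_zeroForcingNumber_le [Nontrivial V] (hconn : G.Connected) {d : ℕ}
    (hdeg : ∀ v, G.degree v ≤ d + 2) :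
    (d + 1) * G.zeroForcingNumber ≤ d * Fintype.card V + 2 := by
  obtain ⟨v⟩ : Nonempty V := inferInstance
  obtain ⟨u, hvu⟩ := hconn.preconnected.exists_adj_of_nontrivial v
  have hedge : ∀ w ∈ ({v, u} : Finset V), ∃ w' ∈ ({v, u} : Finset V), G.Adj w w' := by
    intro w hw
    rcases mem_insert.mp hw with rfl | hw
    · exact ⟨u, by simp, hvu⟩
    · exact ⟨v, by simp, mem_singleton.mp hw ▸ hvu.symm⟩
  obtain ⟨B, hB, hZ⟩ := hconn.exists_isZeroForcingSet_union hdeg {v, u} (insert_nonempty _ _) hedge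
  have hZB : G.zeroForcingNumber ≤ 2 + #B :=
    (zeroForcingNumber_le_card hZ).trans ((card_union_le _ _).trans_eq (by rw [card_pair hvu.ne]))
  obtain ⟨k, hk⟩ := Nat.exists_eq_add_of_le' ((card_pair hvu.ne).symm.trans_le (card_le_univ {v, u}))
  rw [card_compl, card_pair hvu.ne, hk, Nat.add_sub_cancel] at hB
  calc (d + 1) * G.zeroForcingNumber ≤ (d + 1) * (2 + #B) := by gcongr
    _ ≤ 2 * (d + 1) + d * k := by rw [mul_add, mul_comm]; gcongr
    _ = d * Fintype.card V + 2 := by rw [hk]; ring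

end SimpleGraph

open SimpleGraph in
theorem stmt10_general {V : Type*} [Fintype V] (G : SimpleGraph V) [DecidableRel G.Adj] (Δ : ℕ)
    (hΔ : G.maxDegree = Δ) (hconn : G.Connected)
    (hK : ¬ (Fintype.card V = Δ + 1 ∧ G = ⊤)) :
    (G.zeroForcingNumber : ℝ) ≤ ((Δ : ℝ) - 1) * (Fintype.card V : ℝ) / (Δ : ℝ) := by
  classical
  have := hconn.nonempty
  have hG : G ≠ ⊤ := fun h => hK ⟨hΔ ▸ card_eq_maxDegree_add_one_of_eq_top h, h⟩
  obtain ⟨a, b, c, hab, hbc, hnac, hac⟩ := hconn.exists_adj_adj_not_adj_of_ne_top hG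
  have : Nontrivial V := ⟨a, c, hac⟩
  obtain ⟨d, rfl⟩ : ∃ d, Δ = d + 2 :=
    Nat.exists_eq_add_of_le' ((two_le_degree hab.symm hbc hac).trans (hΔ ▸ G.degree_le_maxDegree b))
  have h₁ : ((G.zeroForcingNumber + 2 : ℕ) : ℝ) ≤ Fintype.card V := by
    exact_mod_cast zeroForcingNumber_add_two_le hab hbc hnac hac
  have h₂ : (((d + 1) * G.zeroForcingNumber : ℕ) : ℝ) ≤ ((d * Fintype.card V + 2 : ℕ) : ℝ) := by
    exact_mod_cast hconn.succ_mul_zeroForcingNumber_le fun v => hΔ ▸ G.degree_le_maxDegree v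
  push_cast at h₁ h₂ ⊢
  rw [le_div_iff₀ (by positivity)]
  rcases le_total (Fintype.card V : ℝ) (2 * (d + 2)) with hn | hn <;> nlinarith

theorem stmt10 {V : Type*} [Fintype V] (G : SimpleGraph V) [DecidableRel G.Adj] (Δ : ℕ)
    (hΔ : G.maxDegree = Δ) (h3 : 3 ≤ Δ) (hconn : G.Connected)
    (hK : ¬ (Fintype.card V = Δ + 1 ∧ G = ⊤)) :
    (G.zeroForcingNumber : ℝ) ≤ ((Δ : ℝ) - 1) * (Fintype.card V : ℝ) / (Δ : ℝ) :=
  stmt10_general G Δ hΔ hconn hK
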